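/- For every integer n ≥ 1, the number of Catalan words of length n avoiding the vincular pattern 22-1 equals L_n, the number of Motzkin left-factors with n−1 steps. -/

import Mathlib

/-- A Catalan word: a word of positive integers starting with 1 in which each
letter exceeds its predecessor by at most 1. -/
def IsCatalanWord {n : ℕ} (w : Fin n → ℕ) : Prop :=
  (∀ i, 1 ≤ w i) ∧ (∀ h : 0 < n, w ⟨0, h⟩ = 1) ∧
  ∀ i : ℕ, ∀ h : i + 1 < n, w ⟨i + 1, h⟩ ≤ w ⟨i, by omega⟩ + 1

/-- `w` contains the vincular pattern 22-1: there are indices `i` and `k` with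
`i + 1 < k`, `w i = w (i+1)` and `w k < w i`. -/
def Contains22_1 {n : ℕ} (w : Fin n → ℕ) : Prop :=
  ∃ i k : ℕ, ∃ hk : k < n, ∃ hik : i + 1 < k,
    w ⟨i, by omega⟩ = w ⟨i + 1, by omega⟩ ∧ w ⟨k, hk⟩ < w ⟨i, by omega⟩

/-- `L n`: the number of Motzkin left-factors with `n - 1` steps, i.e. sequences
of `n - 1` steps in `{-1, 0, 1}` with all partial sums nonnegative (A005773). -/
noncomputable def motzkinLeftFactors (n : ℕ) : ℕ :=
  Set.ncard {s : Fin (n - 1) → ℤ | (∀ i, s i = -1 ∨ s i = 0 ∨ s i = 1) ∧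
    ∀ j, 0 ≤ ∑ i ∈ Finset.Iic j, s i}

/-!
Read a 22-1-avoiding Catalan word letter by letter, remembering the previous letter `u` and the
height `φ` of the latest plateau (two equal adjacent letters), below which no later letter may
fall. The next letter `v` ranges over `[max φ 1, u + 1]`, and the number of continuations of
length `m` depends only on the slack `d = u - max φ 1`: the letter `v = u` makes a plateau and
resets the slack to `0`, `v = u + 1` raises it to `d + 1`, and the other letters lower it to
some `e < d`. This is `avoidStep`, while Motzkin left factors from height `h` obey `motzkinStep`.

The ballot numbers `C(d, h) - C(d, h + 1)` intertwine the two recursions: pairing a sequence with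
them turns `motzkinStep` into `avoidStep`, which is a binomial identity once the step is moved
across the pairing (`motzkinStep` is a symmetric tridiagonal operator). Iterating from the constant
sequence `1`, the number of continuations with slack `d` is `∑ₕ (C(d, h) - C(d, h + 1)) Lₘ(h)`,
where `Lₘ(h)` counts left factors from height `h`; at `d = 0` only `Lₘ(0)` survives.
-/

open Finset

namespace CatalanWord

def motzkinStep {R : Type*} [Add R] (f : ℕ → R) : ℕ → R
  | 0 => f 1 + f 0
  | h + 1 => f (h + 2) + f (h + 1) + f h

def avoidStep {R : Type*} [AddCommMonoid R] (g : ℕ → R) (d : ℕ) : R :=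
  g 0 + g (d + 1) + ∑ e ∈ range d, g e

def motzkinCount (m : ℕ) : ℕ → ℕ := motzkinStep^[m] 1

def avoidCount (m : ℕ) : ℕ → ℕ := avoidStep^[m] 1

theorem motzkinCount_succ (m : ℕ) : motzkinCount (m + 1) = motzkinStep (motzkinCount m) :=
  Function.iterate_succ_apply' _ _ _

theorem avoidCount_succ (m : ℕ) : avoidCount (m + 1) = avoidStep (avoidCount m) :=
  Function.iterate_succ_apply' _ _ _

theorem semiconj_natCast_motzkinStep :
    Function.Semiconj (fun f : ℕ → ℕ => ((↑) ∘ f : ℕ → ℤ)) motzkinStep motzkinStep := by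
  intro f
  funext h
  cases h <;> simp [motzkinStep]

theorem semiconj_natCast_avoidStep :
    Function.Semiconj (fun g : ℕ → ℕ => ((↑) ∘ g : ℕ → ℤ)) avoidStep avoidStep := by
  intro g
  funext d
  simp [avoidStep]

theorem sum_range_mul_motzkinStep_sub {R : Type*} [CommRing R] (a f : ℕ → R) (N : ℕ) :
    ∑ h ∈ range (N + 1), (a h * motzkinStep f h - motzkinStep a h * f h) =
      a N * f (N + 1) - a (N + 1) * f N := by
  induction N with
  | zero => simp only [zero_add, range_one, sum_singleton, motzkinStep]; ring
  | succ N ih => rw [sum_range_succ, ih]; simp only [motzkinStep]; ring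

def ballot (d h : ℕ) : ℤ := d.choose h - d.choose (h + 1)

theorem ballot_eq_zero_of_lt {d h : ℕ} (hdh : d < h) : ballot d h = 0 := by
  simp [ballot, Nat.choose_eq_zero_of_lt hdh, Nat.choose_eq_zero_of_lt (hdh.trans h.lt_succ_self)]

theorem ballot_succ_zero (d : ℕ) : ballot (d + 1) 0 = ballot d 0 - 1 := by
  simp [ballot]

theorem ballot_succ_succ (d h : ℕ) : ballot (d + 1) (h + 1) = ballot d h + ballot d (h + 1) := by
  simp only [ballot, Nat.choose_succ_succ' d]
  push_cast
  ring

theorem sum_range_ballot (d h : ℕ) : ∑ e ∈ range d, ballot e h = ballot d (h + 1) := by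
  induction d with
  | zero => simp [ballot]
  | succ d ih => rw [sum_range_succ, ih, ballot_succ_succ, add_comm]

theorem motzkinStep_ballot (d h : ℕ) :
    motzkinStep (ballot d) h = (if h = 0 then 1 else 0) + ballot (d + 1) h + ballot d (h + 1) := by
  cases h with
  | zero => rw [motzkinStep, if_pos rfl, ballot_succ_zero]; ring
  | succ h => rw [motzkinStep, if_neg h.succ_ne_zero, ballot_succ_succ]; ring

def ballotPairing (f : ℕ → ℤ) (d : ℕ) : ℤ := ∑ h ∈ range (d + 1), ballot d h * f h

theorem sum_range_ballot_mul {d N : ℕ} (hN : d < N) (f : ℕ → ℤ) :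
    ∑ h ∈ range N, ballot d h * f h = ballotPairing f d := by
  refine (sum_subset (range_subset_range.2 hN) fun h _ hh => ?_).symm
  rw [ballot_eq_zero_of_lt (by simpa using hh), zero_mul]

theorem ballotPairing_apply_zero (f : ℕ → ℤ) : ballotPairing f 0 = f 0 := by
  simp [ballotPairing, ballot]

theorem ballotPairing_one : ballotPairing 1 = 1 := by
  funext d
  simp only [ballotPairing, ballot, Pi.one_apply, mul_one]
  rw [sum_range_sub' (fun h => (d.choose h : ℤ)), Nat.choose_eq_zero_of_lt (Nat.lt_succ_self d)]
  simp

theorem semiconj_ballotPairing : Function.Semiconj ballotPairing motzkinStep avoidStep := by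
  intro f
  funext d
  have hAdjoint :
      ballotPairing (motzkinStep f) d = ∑ h ∈ range (d + 2), motzkinStep (ballot d) h * f h := by
    have green := sum_range_mul_motzkinStep_sub (ballot d) f (d + 1)
    rwa [ballot_eq_zero_of_lt (by omega), ballot_eq_zero_of_lt (by omega), zero_mul, zero_mul,
      sub_zero, sum_sub_distrib, sub_eq_zero, sum_range_ballot_mul (by omega)] at green
  have hTail :
      ∑ h ∈ range (d + 2), ballot d (h + 1) * f h = ∑ e ∈ range d, ballotPairing f e := by
    simp_rw [← sum_range_ballot, sum_mul]
    rw [sum_comm]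
    exact sum_congr rfl fun e he => sum_range_ballot_mul (by simp at he; omega) f
  calc ballotPairing (motzkinStep f) d
      = ∑ h ∈ range (d + 2), (if h = 0 then 1 else 0) * f h +
          ∑ h ∈ range (d + 2), ballot (d + 1) h * f h +
          ∑ h ∈ range (d + 2), ballot d (h + 1) * f h := by
        simp only [hAdjoint, motzkinStep_ballot, add_mul, sum_add_distrib]
    _ = avoidStep (ballotPairing f) d := by
        rw [hTail, sum_range_ballot_mul (Nat.lt_succ_self _), avoidStep, ballotPairing_apply_zero]
        simp

theorem natCast_comp_motzkinCount (m : ℕ) : ((↑) ∘ motzkinCount m : ℕ → ℤ) = motzkinStep^[m] 1 :=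
  (semiconj_natCast_motzkinStep.iterate_right m 1).trans (congrArg _ (funext fun _ => Nat.cast_one))

theorem natCast_comp_avoidCount (m : ℕ) : ((↑) ∘ avoidCount m : ℕ → ℤ) = avoidStep^[m] 1 :=
  (semiconj_natCast_avoidStep.iterate_right m 1).trans (congrArg _ (funext fun _ => Nat.cast_one))

theorem natCast_avoidCount_eq_ballotPairing (m d : ℕ) :
    (avoidCount m d : ℤ) = ballotPairing ((↑) ∘ motzkinCount m) d := by
  rw [natCast_comp_motzkinCount, semiconj_ballotPairing.iterate_right, ballotPairing_one,
    ← natCast_comp_avoidCount]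
  rfl

theorem avoidCount_zero_eq_motzkinCount_zero (m : ℕ) : avoidCount m 0 = motzkinCount m 0 := by
  have h := natCast_avoidCount_eq_ballotPairing m 0
  rwa [ballotPairing_apply_zero, Function.comp_apply, Nat.cast_inj] at h

theorem finite_and_card_of_forall {α : Type*} {P : (Fin 0 → α) → Prop} (hP : ∀ w, P w) :
    Finite {w // P w} ∧ Nat.card {w // P w} = 1 := by
  have e := Equiv.subtypeUnivEquiv hP
  exact ⟨Finite.of_equiv _ e.symm, by rw [Nat.card_congr e, Nat.card_unique]⟩

def consSubtypeEquiv {α : Type*} {m : ℕ} {P : (Fin (m + 1) → α) → Prop} (A : Finset α)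
    {Q : α → (Fin m → α) → Prop} (hP : ∀ a t, P (Fin.cons a t) ↔ a ∈ A ∧ Q a t) :
    {w // P w} ≃ Σ a : A, {t // Q a t} where
  toFun w :=
    have h := (hP (w.1 0) (Fin.tail w.1)).1 (by rw [Fin.cons_self_tail]; exact w.2)
    ⟨⟨w.1 0, h.1⟩, ⟨Fin.tail w.1, h.2⟩⟩
  invFun p := ⟨Fin.cons p.1.1 p.2.1, (hP _ _).2 ⟨p.1.2, p.2.2⟩⟩
  left_inv w := Subtype.ext (Fin.cons_self_tail w.1)
  right_inv _ := rfl

theorem finite_and_card_of_cons {α : Type*} {m : ℕ} {P : (Fin (m + 1) → α) → Prop}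
    (A : Finset α) {Q : α → (Fin m → α) → Prop} (hP : ∀ a t, P (Fin.cons a t) ↔ a ∈ A ∧ Q a t)
    (hQ : ∀ a ∈ A, Finite {t // Q a t}) :
    Finite {w // P w} ∧ Nat.card {w // P w} = ∑ a ∈ A, Nat.card {t // Q a t} := by
  have : ∀ a : A, Finite {t // Q a t} := fun a => hQ a a.2
  refine ⟨Finite.of_equiv _ (consSubtypeEquiv A hP).symm, ?_⟩
  rw [Nat.card_congr (consSubtypeEquiv A hP), Nat.card_sigma]
  exact sum_coe_sort A fun a => Nat.card {t // Q a t}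

theorem sum_Iic_zero {M : Type*} [AddCommMonoid M] {m : ℕ} (s : Fin (m + 1) → M) :
    ∑ i ∈ Iic 0, s i = s 0 := by
  simp [← filter_ge_eq_Iic, sum_filter]

theorem sum_Iic_succ_cons {M : Type*} [AddCommMonoid M] {m : ℕ} (c : M) (t : Fin m → M)
    (j : Fin m) : ∑ i ∈ Iic j.succ, (Fin.cons c t : Fin (m + 1) → M) i = c + ∑ i ∈ Iic j, t i := by
  simp [← filter_ge_eq_Iic, sum_filter, Fin.sum_univ_succ]

def IsMotzkinPathFrom {m : ℕ} (h : ℤ) (s : Fin m → ℤ) : Prop :=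
  (∀ i, s i = -1 ∨ s i = 0 ∨ s i = 1) ∧ ∀ j, 0 ≤ h + ∑ i ∈ Iic j, s i

def admissibleSteps (h : ℤ) : Finset ℤ := ({-1, 0, 1} : Finset ℤ).filter (0 ≤ h + ·)

theorem isMotzkinPathFrom_cons {m : ℕ} (h c : ℤ) (t : Fin m → ℤ) :
    IsMotzkinPathFrom h (Fin.cons c t) ↔ c ∈ admissibleSteps h ∧ IsMotzkinPathFrom (h + c) t := by
  simp only [IsMotzkinPathFrom, admissibleSteps, Fin.forall_fin_succ, Fin.cons_zero, Fin.cons_succ,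
    sum_Iic_zero, sum_Iic_succ_cons, mem_filter, mem_insert, mem_singleton, add_assoc]
  tauto

theorem sum_admissibleSteps_eq_motzkinStep (f : ℕ → ℕ) (h : ℕ) :
    ∑ c ∈ admissibleSteps h, f ((h : ℤ) + c).toNat = motzkinStep f h := by
  cases h with
  | zero =>
    rw [show admissibleSteps ((0 : ℕ) : ℤ) = {1, 0} by decide]
    simp [motzkinStep]
  | succ h =>
    rw [admissibleSteps,
      filter_true_of_mem fun c hc => by simp only [mem_insert, mem_singleton] at hc; omega,
      sum_insert (by decide), sum_insert (by decide), sum_singleton, motzkinStep,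
      show ((h + 1 : ℕ) + -1 : ℤ).toNat = h by omega,
      show ((h + 1 : ℕ) + 0 : ℤ).toNat = h + 1 by omega,
      show ((h + 1 : ℕ) + 1 : ℤ).toNat = h + 2 by omega]
    ring

theorem finite_and_card_isMotzkinPathFrom (m h : ℕ) :
    Finite {s : Fin m → ℤ // IsMotzkinPathFrom h s} ∧
      Nat.card {s : Fin m → ℤ // IsMotzkinPathFrom h s} = motzkinCount m h := by
  induction m generalizing h with
  | zero => exact finite_and_card_of_forall fun _ => ⟨finZeroElim, finZeroElim⟩
  | succ m ih =>
    have hfiber : ∀ c ∈ admissibleSteps h,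
        Finite {t : Fin m → ℤ // IsMotzkinPathFrom (h + c) t} ∧
          Nat.card {t : Fin m → ℤ // IsMotzkinPathFrom (h + c) t} =
            motzkinCount m ((h : ℤ) + c).toNat := fun c hc => by
      have := ih ((h : ℤ) + c).toNat
      rwa [Int.toNat_of_nonneg (mem_filter.1 hc).2] at this
    obtain ⟨hfinite, hcard⟩ :=
      finite_and_card_of_cons _ (isMotzkinPathFrom_cons h) fun c hc => (hfiber c hc).1
    refine ⟨hfinite, ?_⟩
    rw [hcard, sum_congr rfl fun c hc => (hfiber c hc).2, sum_admissibleSteps_eq_motzkinStep,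
      motzkinCount_succ]

theorem motzkinLeftFactors_succ (m : ℕ) : motzkinLeftFactors (m + 1) = motzkinCount m 0 := by
  rw [motzkinLeftFactors, Nat.add_sub_cancel, ← Nat.card_coe_set_eq,
    ← (finite_and_card_isMotzkinPathFrom m 0).2]
  simp only [IsMotzkinPathFrom, Nat.cast_zero, zero_add, Set.coe_ofPred]

def RisesAtMostOne {n : ℕ} (w : Fin n → ℕ) : Prop :=
  ∀ i : ℕ, ∀ h : i + 1 < n, w ⟨i + 1, h⟩ ≤ w ⟨i, by omega⟩ + 1

section Cons

variable {m : ℕ} (u a : ℕ) (t : Fin m → ℕ)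

theorem risesAtMostOne_cons_cons :
    RisesAtMostOne (Fin.cons u (Fin.cons a t : Fin (m + 1) → ℕ) : Fin (m + 2) → ℕ) ↔
      a ≤ u + 1 ∧ RisesAtMostOne (Fin.cons a t : Fin (m + 1) → ℕ) := by
  constructor
  · intro h
    exact ⟨h 0 (Nat.succ_lt_succ m.succ_pos), fun i hi => h (i + 1) (by omega)⟩
  · rintro ⟨ha, h⟩ (_ | i) hi
    exacts [ha, h i (by omega)]

theorem contains22_1_cons_cons :
    Contains22_1 (Fin.cons u (Fin.cons a t : Fin (m + 1) → ℕ) : Fin (m + 2) → ℕ) ↔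
      (a = u ∧ ∃ j, t j < u) ∨ Contains22_1 (Fin.cons a t : Fin (m + 1) → ℕ) := by
  constructor
  · rintro ⟨_ | i, k, hk, hik, heq, hlt⟩
    · obtain ⟨j, rfl⟩ : ∃ j, k = j + 2 := ⟨k - 2, by omega⟩
      exact Or.inl ⟨heq.symm, ⟨j, by omega⟩, hlt⟩
    · obtain ⟨j, rfl⟩ : ∃ j, k = j + 1 := ⟨k - 1, by omega⟩
      exact Or.inr ⟨i, j, by omega, by omega, heq, hlt⟩
  · rintro (⟨rfl, ⟨j, hj⟩, hlt⟩ | ⟨i, k, hk, hik, heq, hlt⟩)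
    · refine ⟨0, j + 2, by omega, by omega, rfl, ?_⟩
      exact hlt
    · exact ⟨i + 1, k + 1, by omega, by omega, heq, hlt⟩

end Cons

/-- `w` can follow a prefix ending in the letter `u` whose plateaus force every later letter to
be at least `φ` (`φ = 0` if there is no plateau yet). -/
def IsAvoidingContinuation {m : ℕ} (u φ : ℕ) (w : Fin m → ℕ) : Prop :=
  (∀ i, max φ 1 ≤ w i) ∧ RisesAtMostOne (Fin.cons u w : Fin (m + 1) → ℕ) ∧
    ¬Contains22_1 (Fin.cons u w : Fin (m + 1) → ℕ)

theorem isAvoidingContinuation_cons {m : ℕ} (u φ a : ℕ) (t : Fin m → ℕ) :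
    IsAvoidingContinuation u φ (Fin.cons a t) ↔
      a ∈ Icc (max φ 1) (u + 1) ∧ IsAvoidingContinuation a (if a = u then u else φ) t := by
  simp only [IsAvoidingContinuation, Fin.forall_fin_succ, Fin.cons_zero, Fin.cons_succ,
    risesAtMostOne_cons_cons, contains22_1_cons_cons, mem_Icc, not_or, not_and, not_exists,
    not_lt]
  split_ifs with hau
  · subst hau
    constructor
    · rintro ⟨⟨ha, -⟩, ⟨-, hrises⟩, hfloor, havoid⟩
      exact ⟨⟨ha, a.le_succ⟩, fun i => by have := hfloor rfl i; omega, hrises, havoid⟩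
    · rintro ⟨⟨ha, -⟩, hfloor, hrises, havoid⟩
      exact ⟨⟨ha, fun i => by have := hfloor i; omega⟩, ⟨a.le_succ, hrises⟩,
        fun _ i => by have := hfloor i; omega, havoid⟩
  · simp only [hau, false_imp_iff, true_and]
    tauto

theorem sum_Icc_eq_avoidStep {R : Type*} [AddCommMonoid R] (g : ℕ → R) {a u : ℕ} (hau : a ≤ u) :
    ∑ v ∈ Icc a (u + 1), g (if v = u then 0 else v - a) = avoidStep g (u - a) := by
  obtain ⟨d, rfl⟩ := Nat.exists_eq_add_of_le hau
  rw [← Ico_add_one_right_eq_Icc, sum_Ico_eq_sum_range, show a + d + 1 + 1 - a = d + 2 by omega,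
    sum_range_succ, sum_range_succ, Nat.add_sub_cancel_left, avoidStep]
  have hlow : ∀ k ∈ range d, g (if a + k = a + d then 0 else a + k - a) = g k := fun k hk => by
    rw [if_neg (by simp at hk; omega), Nat.add_sub_cancel_left]
  rw [sum_congr rfl hlow, if_pos rfl, if_neg (by omega), show a + (d + 1) - a = d + 1 by omega]
  abel

theorem finite_and_card_isAvoidingContinuation (m : ℕ) {u φ : ℕ} (hu : 1 ≤ u) (hφ : φ ≤ u) :
    Finite {w : Fin m → ℕ // IsAvoidingContinuation u φ w} ∧
      Nat.card {w : Fin m → ℕ // IsAvoidingContinuation u φ w} = avoidCount m (u - max φ 1) := by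
  induction m generalizing u φ with
  | zero =>
    refine finite_and_card_of_forall fun w => ⟨finZeroElim, ?_, ?_⟩
    · intro i hi
      omega
    · rintro ⟨i, k, hk, hik, -⟩
      omega
  | succ m ih =>
    have hfiber : ∀ v ∈ Icc (max φ 1) (u + 1),
        Finite {t : Fin m → ℕ // IsAvoidingContinuation v (if v = u then u else φ) t} ∧
          Nat.card {t : Fin m → ℕ // IsAvoidingContinuation v (if v = u then u else φ) t} =
            avoidCount m (if v = u then 0 else v - max φ 1) := fun v hv => by
      rw [mem_Icc] at hv
      split_ifs with hvu
      · subst hvu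
        simpa [Nat.sub_eq_zero_of_le (le_max_left v 1)] using ih hu le_rfl
      · exact ih (by omega) (by omega)
    obtain ⟨hfinite, hcard⟩ := finite_and_card_of_cons _ (isAvoidingContinuation_cons u φ)
      fun v hv => (hfiber v hv).1
    refine ⟨hfinite, ?_⟩
    rw [hcard, sum_congr rfl fun v hv => (hfiber v hv).2,
      sum_Icc_eq_avoidStep _ (max_le hφ hu), avoidCount_succ]

theorem isCatalanWord_cons_and_not_contains22_1_iff {m : ℕ} (a : ℕ) (t : Fin m → ℕ) :
    (IsCatalanWord (Fin.cons a t : Fin (m + 1) → ℕ) ∧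
        ¬Contains22_1 (Fin.cons a t : Fin (m + 1) → ℕ)) ↔
      a ∈ ({1} : Finset ℕ) ∧ IsAvoidingContinuation 1 0 t := by
  rw [mem_singleton]
  constructor
  · rintro ⟨⟨hpos, hfirst, hrises⟩, havoid⟩
    obtain rfl : a = 1 := hfirst (Nat.succ_pos m)
    exact ⟨rfl, fun i => hpos i.succ, hrises, havoid⟩
  · rintro ⟨rfl, hpos, hrises, havoid⟩
    exact ⟨⟨Fin.cases le_rfl hpos, fun _ => rfl, hrises⟩, havoid⟩

theorem ncard_catalanWords_avoiding22_1 (m : ℕ) :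
    Set.ncard {w : Fin (m + 1) → ℕ | IsCatalanWord w ∧ ¬Contains22_1 w} = avoidCount m 0 := by
  rw [← Nat.card_coe_set_eq]
  obtain ⟨hfinite, hcard⟩ := finite_and_card_isAvoidingContinuation m le_rfl (Nat.zero_le 1)
  obtain ⟨-, hcard'⟩ := finite_and_card_of_cons (P := fun w => IsCatalanWord w ∧ ¬Contains22_1 w)
    {1} isCatalanWord_cons_and_not_contains22_1_iff fun _ _ => hfinite
  rw [Set.coe_ofPred, hcard', sum_singleton, hcard]
  rfl

end CatalanWord

open CatalanWord

theorem catalan_avoid_22_1 (n : ℕ) (hn : 1 ≤ n) :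
    Set.ncard {w : Fin n → ℕ | IsCatalanWord w ∧ ¬ Contains22_1 w} =
      motzkinLeftFactors n := by
  obtain ⟨m, rfl⟩ : ∃ m, n = m + 1 := ⟨n - 1, by omega⟩
  rw [ncard_catalanWords_avoiding22_1, motzkinLeftFactors_succ,
    avoidCount_zero_eq_motzkinCount_zero]
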